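/- arXiv:0910.4800 — 3 statements merged into one kernel-verified Lean document; each statement's English description precedes it below -/
import Mathlib

section
/- Let X be a compact topological space and T : X → X a continuous map. Then the set CF(T) satisfies: (i) 1 ∈ CF(T); (ii) if n ∈ CF(T) and d is a positive divisor of n, then d ∈ CF(T); (iii) if n₁, n₂, …, n_k ∈ CF(T), then lcm(n₁, n₂, …, n_k) ∈ CF(T). -/
/-- `CF(T)`: the set of `n ≥ 1` such that the cyclic permutation of order `n` is a
continuous factor of `T`, i.e. there is a continuous surjection `f : X → ℤ/nℤ` with
`f(Tx) = f(x) + 1`. -/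
def CF {X : Type*} [TopologicalSpace X] (T : X → X) : Set ℕ :=
  {n | 0 < n ∧ ∃ f : X → ZMod n,
    Continuous f ∧ Function.Surjective f ∧ ∀ x, f (T x) = f x + 1}

/-!
On a nonempty space, surjectivity in the definition of `CF T` is automatic, because
`f (T^[k] x) = f x + k` runs through all of `ZMod n`. So it suffices to produce a continuous
`f : X → ZMod n` with `f ∘ T = f + 1`, and such an `f` is obtained from any continuous `g` into a
discrete group with `g ∘ T = g + a` by composing with a homomorphism sending `a` to `1`.
For a divisor `d ∣ n` this is the reduction `ZMod n → ZMod d`. For `lcm m n` take `g = (f₁, f₂)`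
with `a = (1, 1)`; a homomorphism `ZMod m × ZMod n → ZMod (lcm m n)` sending `(1, 1)` to `1`
exists by Bézout.
-/

namespace ZMod

theorem exists_addMonoidHom_map_one {A : Type*} [AddCommGroup A] {m : ℕ} {c : A}
    (hc : m • c = 0) : ∃ φ : ZMod m →+ A, φ 1 = c :=
  ⟨lift m ⟨zmultiplesHom A c, by simpa using hc⟩, by
    simpa using lift_coe m ⟨zmultiplesHom A c, by simpa using hc⟩ 1⟩

theorem nsmul_natCast_mul_eq_zero {l m k : ℕ} (h : m * k = l) (z : ℤ) :
    m • ((k * z : ℤ) : ZMod l) = 0 := by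
  rw [nsmul_eq_mul, Int.cast_mul, Int.cast_natCast, ← mul_assoc, ← Nat.cast_mul, h,
    natCast_self, zero_mul]

/-- With `m = m' g`, `n = n' g`, `g = gcd m n` and `u m' + v n' = 1`, send `(1, 0) ↦ v n'` and
`(0, 1) ↦ u m'`; these are well defined because `m n' = n m' = lcm m n`. -/
theorem exists_addMonoidHom_prod_lcm_map_one_one {m n : ℕ} (hm : m ≠ 0) :
    ∃ ψ : ZMod m × ZMod n →+ ZMod (m.lcm n), ψ (1, 1) = 1 := by
  obtain ⟨m', n', hcop, hm', hn'⟩ := Nat.exists_coprime m n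
  obtain ⟨u, v, huv⟩ := Nat.isCoprime_iff_coprime.2 hcop
  have hg : 0 < m.gcd n := Nat.gcd_pos_of_pos_left n (Nat.pos_of_ne_zero hm)
  have hlm : m * n' = m.lcm n := Nat.eq_of_mul_eq_mul_right hg <| by
    rw [mul_assoc, ← hn', mul_comm (m.lcm n), Nat.gcd_mul_lcm]
  have hln : n * m' = m.lcm n := Nat.eq_of_mul_eq_mul_right hg <| by
    rw [mul_assoc, ← hm', mul_comm (m.lcm n), Nat.gcd_mul_lcm, mul_comm]
  obtain ⟨α, hα⟩ := exists_addMonoidHom_map_one (nsmul_natCast_mul_eq_zero hlm v)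
  obtain ⟨β, hβ⟩ := exists_addMonoidHom_map_one (nsmul_natCast_mul_eq_zero hln u)
  refine ⟨α.coprod β, ?_⟩
  rw [AddMonoidHom.coprod_apply, hα, hβ, ← Int.cast_add, ← Int.cast_one, ← huv]
  push_cast
  ring

end ZMod

theorem surjective_of_map_apply_eq_add_one {X : Type*} [Nonempty X] {T : X → X} {n : ℕ}
    [NeZero n] {f : X → ZMod n} (hf : ∀ x, f (T x) = f x + 1) : Function.Surjective f := by
  obtain ⟨x₀⟩ := ‹Nonempty X›
  have hiter (k : ℕ) : f (T^[k] x₀) = f x₀ + k := by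
    simpa [add_right_iterate] using
      (show Function.Semiconj f T (· + 1) from hf).iterate_right k x₀
  intro c
  obtain ⟨k, hk⟩ := ZMod.natCast_zmod_surjective (c - f x₀)
  exact ⟨T^[k] x₀, by rw [hiter, hk, add_sub_cancel]⟩

section

variable {X : Type*} [TopologicalSpace X] [Nonempty X] {T : X → X}

theorem mem_CF_of_continuous {n : ℕ} (hn : 0 < n) {f : X → ZMod n} (hfc : Continuous f)
    (hf : ∀ x, f (T x) = f x + 1) : n ∈ CF T :=
  haveI : NeZero n := ⟨hn.ne'⟩
  ⟨hn, f, hfc, surjective_of_map_apply_eq_add_one hf, hf⟩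

theorem mem_CF_of_addMonoidHom {A : Type*} [AddCommGroup A] [TopologicalSpace A]
    [DiscreteTopology A] {g : X → A} {a : A} (hgc : Continuous g)
    (hg : ∀ x, g (T x) = g x + a) {n : ℕ} (hn : 0 < n) (φ : A →+ ZMod n) (hφ : φ a = 1) :
    n ∈ CF T :=
  mem_CF_of_continuous hn (f := φ ∘ g) (continuous_of_discreteTopology.comp hgc) fun x => by
    simp only [Function.comp_apply, hg, map_add, hφ]

theorem one_mem_CF : 1 ∈ CF T :=
  mem_CF_of_continuous one_pos (f := fun _ => 0) continuous_const fun _ => Subsingleton.elim _ _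

theorem mem_CF_of_dvd {n d : ℕ} (hn : n ∈ CF T) (hd : 0 < d) (hdn : d ∣ n) : d ∈ CF T := by
  obtain ⟨-, f, hfc, -, hf⟩ := hn
  exact mem_CF_of_addMonoidHom hfc hf hd (ZMod.castHom hdn (ZMod d)).toAddMonoidHom
    (map_one (ZMod.castHom hdn (ZMod d)))

theorem lcm_mem_CF {m n : ℕ} (hm : m ∈ CF T) (hn : n ∈ CF T) : m.lcm n ∈ CF T := by
  obtain ⟨hm0, f₁, hf₁c, -, hf₁⟩ := hm
  obtain ⟨hn0, f₂, hf₂c, -, hf₂⟩ := hn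
  obtain ⟨ψ, hψ⟩ := ZMod.exists_addMonoidHom_prod_lcm_map_one_one (n := n) hm0.ne'
  exact mem_CF_of_addMonoidHom (hf₁c.prodMk hf₂c) (a := (1, 1))
    (fun x => by simp only [hf₁, hf₂, Prod.mk_add_mk]) (Nat.lcm_pos hm0 hn0) ψ hψ

theorem finset_lcm_mem_CF {s : Finset ℕ} (hs : ↑s ⊆ CF T) : s.lcm id ∈ CF T := by
  classical
  induction s using Finset.induction_on with
  | empty => simpa using one_mem_CF
  | insert a s _ ih =>
    rw [Finset.coe_insert, Set.insert_subset_iff] at hs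
    rw [Finset.lcm_insert, lcm_eq_nat_lcm]
    exact lcm_mem_CF hs.1 (ih hs.2)

end

theorem stmt17_general {X : Type*} [TopologicalSpace X] [Nonempty X]
    (T : X → X) :
    1 ∈ CF T ∧
    (∀ n ∈ CF T, ∀ d : ℕ, 0 < d → d ∣ n → d ∈ CF T) ∧
    (∀ s : Finset ℕ, s.Nonempty → ↑s ⊆ CF T → s.lcm id ∈ CF T) :=
  ⟨one_mem_CF, fun _ hn _ hd hdn => mem_CF_of_dvd hn hd hdn,
    fun _ _ hs => finset_lcm_mem_CF hs⟩

/-- Properties of the set `CF(T)` of orders of cyclic continuous factors of a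
continuous map `T` of a compact space: (i) `1 ∈ CF(T)`; (ii) `CF(T)` is closed
under taking positive divisors; (iii) `CF(T)` is closed under least common
multiples of finitely many of its elements. -/
theorem stmt17 {X : Type*} [TopologicalSpace X] [CompactSpace X] [Nonempty X]
    (T : X → X) (hT : Continuous T) :
    1 ∈ CF T ∧
    (∀ n ∈ CF T, ∀ d : ℕ, 0 < d → d ∣ n → d ∈ CF T) ∧
    (∀ s : Finset ℕ, s.Nonempty → ↑s ⊆ CF T → s.lcm id ∈ CF T) :=
  stmt17_general T
end

section
/- Let X be a compact topological space and T : X → X a continuous map. (a) If n ∈ CF(T), then T admits a continuous eigenfunction with eigenvalue e^{2πi/n}: there is a continuous φ : X → ℂ, not identically zero, with φ(Tx) = e^{2πi/n}·φ(x) for all x ∈ X. (b) If T is transitive (some point has dense orbit) and T admits a continuous, not identically zero φ : X → ℂ with φ(Tx) = e^{2πi/n}·φ(x) for all x, then n ∈ CF(T). (c) If T is transitive, then any two continuous eigenfunctions of T with the same eigenvalue λ ∈ ℂ are scalar multiples of one another. -/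
/-!
The eigenvalue `e^{2πi/n}` is the image of `1` under the standard character
`χ : ℤ/nℤ → ℂ`, `χ j = e^{2πi j/n}`, which is injective. If `f` is a cyclic factor of order `n`,
then `χ ∘ f` is an eigenfunction. Conversely, for a point `x₀` with dense orbit, a continuous
eigenfunction is determined by its value at `x₀`; in particular it does not vanish there and
`g = φ / φ x₀` takes the values `χ k` along the orbit. Since the finite set `range χ` is closed,
`g` takes values in it everywhere, and `χ⁻¹ ∘ g` is the required factor map, continuous because
`range χ` is discrete.
-/

open Complex Real

section CyclicCharacter

variable {n : ℕ} [NeZero n]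

theorem ZMod.stdAddChar_one : ZMod.stdAddChar (1 : ZMod n) = exp (2 * π * I / n) := by
  simpa using ZMod.stdAddChar_coe (N := n) 1

theorem ZMod.stdAddChar_natCast (k : ℕ) :
    ZMod.stdAddChar (k : ZMod n) = exp (2 * π * I / n) ^ k := by
  rw [← nsmul_one, AddChar.map_nsmul_eq_pow, ZMod.stdAddChar_one]

end CyclicCharacter

section Eigenfunction

variable {X : Type*} {T : X → X} {lam : ℂ} {φ ψ : X → ℂ}

theorem eigen_iterate_apply (hφ : ∀ x, φ (T x) = lam * φ x) (k : ℕ) (x : X) :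
    φ (T^[k] x) = lam ^ k * φ x := by
  induction k with
  | zero => simp
  | succ k ih => rw [Function.iterate_succ_apply', hφ, ih, pow_succ']; ring

variable [TopologicalSpace X] {x₀ : X}

theorem eigen_eq_of_denseRange_iterate (hx₀ : DenseRange fun k : ℕ => T^[k] x₀)
    (hφc : Continuous φ) (hψc : Continuous ψ)
    (hφ : ∀ x, φ (T x) = lam * φ x) (hψ : ∀ x, ψ (T x) = lam * ψ x) (h : φ x₀ = ψ x₀) :
    φ = ψ :=
  hx₀.equalizer hφc hψc <| funext fun k => by
    simp only [Function.comp_apply, eigen_iterate_apply hφ, eigen_iterate_apply hψ, h]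

theorem eigen_apply_ne_zero_of_denseRange_iterate (hx₀ : DenseRange fun k : ℕ => T^[k] x₀)
    (hφc : Continuous φ) (hφ0 : φ ≠ 0) (hφ : ∀ x, φ (T x) = lam * φ x) : φ x₀ ≠ 0 :=
  fun h => hφ0 <| eigen_eq_of_denseRange_iterate hx₀ hφc continuous_const hφ
    (fun _ => (mul_zero lam).symm) h

theorem eigen_eq_const_mul_of_denseRange_iterate (hx₀ : DenseRange fun k : ℕ => T^[k] x₀)
    (hφc : Continuous φ) (hφ0 : φ ≠ 0) (hφ : ∀ x, φ (T x) = lam * φ x)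
    (hψc : Continuous ψ) (hψ : ∀ x, ψ (T x) = lam * ψ x) :
    ∃ c : ℂ, ψ = fun x => c * φ x := by
  have hφx₀ := eigen_apply_ne_zero_of_denseRange_iterate hx₀ hφc hφ0 hφ
  refine ⟨ψ x₀ / φ x₀, eigen_eq_of_denseRange_iterate hx₀ hψc (continuous_const.mul hφc) hψ
    (fun x => by rw [hφ]; ring) ?_⟩
  field_simp

end Eigenfunction

section CyclicFactor

variable {X : Type*} [TopologicalSpace X] {T : X → X} {n : ℕ}

theorem exists_eigen_of_mem_CF (hn : n ∈ CF T) :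
    ∃ φ : X → ℂ, Continuous φ ∧ φ ≠ 0 ∧ ∀ x, φ (T x) = exp (2 * π * I / n) * φ x := by
  obtain ⟨hn, f, hfc, hfs, hfT⟩ := hn
  have : NeZero n := ⟨hn.ne'⟩
  refine ⟨ZMod.stdAddChar ∘ f, continuous_of_discreteTopology.comp hfc,
    fun h => ZMod.stdAddChar.coe_ne_zero (hfs.injective_comp_right h), fun x => ?_⟩
  rw [Function.comp_apply, Function.comp_apply, hfT, AddChar.map_add_eq_mul,
    ZMod.stdAddChar_one, mul_comm]

theorem mem_CF_of_eigen_of_denseRange_iterate {x₀ : X}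
    (hx₀ : DenseRange fun k : ℕ => T^[k] x₀) (hn : 0 < n) {φ : X → ℂ}
    (hφc : Continuous φ) (hφ0 : φ ≠ 0) (hφ : ∀ x, φ (T x) = exp (2 * π * I / n) * φ x) :
    n ∈ CF T := by
  have : NeZero n := ⟨hn.ne'⟩
  set χ : ZMod n → ℂ := ⇑(ZMod.stdAddChar (N := n))
  have hχ : Function.Injective χ := ZMod.injective_stdAddChar
  have hφx₀ := eigen_apply_ne_zero_of_denseRange_iterate hx₀ hφc hφ0 hφ
  set g : X → ℂ := fun x => φ x / φ x₀
  have hgc : Continuous g := hφc.div_const _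
  have hg_orbit (k : ℕ) : g (T^[k] x₀) = χ k := by
    simp only [g, χ, eigen_iterate_apply hφ, ZMod.stdAddChar_natCast, mul_div_assoc,
      div_self hφx₀, mul_one]
  have hg_mem (x : X) : g x ∈ Set.range χ := by
    refine closure_minimal ?_ (Set.finite_range χ).isClosed
      (hgc.range_subset_closure_image_dense hx₀ ⟨x, rfl⟩)
    rintro _ ⟨_, ⟨k, rfl⟩, rfl⟩
    exact ⟨k, (hg_orbit k).symm⟩
  set f : X → ZMod n := (Equiv.ofInjective χ hχ).symm ∘ Set.codRestrict g _ hg_mem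
  have hf (x : X) : χ (f x) = g x := Equiv.apply_ofInjective_symm hχ _
  refine ⟨hn, f, continuous_of_discreteTopology.comp (hgc.codRestrict hg_mem), fun j => ?_,
    fun x => hχ ?_⟩
  · refine ⟨T^[j.val] x₀, hχ ?_⟩
    rw [hf, hg_orbit, ZMod.natCast_zmod_val]
  · simp only [χ, hf, AddChar.map_add_eq_mul, ZMod.stdAddChar_one, g, hφ]
    ring

end CyclicFactor

theorem stmt18_general {X : Type*} [TopologicalSpace X]
    (T : X → X) :
    (∀ n ∈ CF T, ∃ φ : X → ℂ, Continuous φ ∧ φ ≠ 0 ∧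
      ∀ x, φ (T x) = Complex.exp (2 * Real.pi * Complex.I / (n : ℂ)) * φ x) ∧
    ((∃ x₀ : X, Dense {y | ∃ k : ℕ, T^[k] x₀ = y}) →
      (∀ n : ℕ, 0 < n →
        (∃ φ : X → ℂ, Continuous φ ∧ φ ≠ 0 ∧
          ∀ x, φ (T x) = Complex.exp (2 * Real.pi * Complex.I / (n : ℂ)) * φ x) →
        n ∈ CF T) ∧
      (∀ (lam : ℂ) (φ ψ : X → ℂ),
        Continuous φ → φ ≠ 0 → (∀ x, φ (T x) = lam * φ x) →
        Continuous ψ → ψ ≠ 0 → (∀ x, ψ (T x) = lam * ψ x) →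
        ∃ c : ℂ, ψ = fun x => c * φ x)) := by
  refine ⟨fun n hn => exists_eigen_of_mem_CF hn, fun ⟨x₀, hx₀⟩ => ⟨?_, ?_⟩⟩
  · rintro n hn ⟨φ, hφc, hφ0, hφ⟩
    exact mem_CF_of_eigen_of_denseRange_iterate hx₀ hn hφc hφ0 hφ
  · intro lam φ ψ hφc hφ0 hφ hψc _ hψ
    exact eigen_eq_const_mul_of_denseRange_iterate hx₀ hφc hφ0 hφ hψc hψ

/-- (a) If `n ∈ CF(T)` then `T` has a continuous eigenfunction with eigenvalue
`e^{2πi/n}`.  (b) For transitive `T` the converse holds.  (c) For transitive `T`,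
any two continuous eigenfunctions with the same eigenvalue are scalar multiples of
one another. -/
theorem stmt18 {X : Type*} [TopologicalSpace X] [CompactSpace X]
    (T : X → X) (hT : Continuous T) :
    (∀ n ∈ CF T, ∃ φ : X → ℂ, Continuous φ ∧ φ ≠ 0 ∧
      ∀ x, φ (T x) = Complex.exp (2 * Real.pi * Complex.I / (n : ℂ)) * φ x) ∧
    ((∃ x₀ : X, Dense {y | ∃ k : ℕ, T^[k] x₀ = y}) →
      (∀ n : ℕ, 0 < n →
        (∃ φ : X → ℂ, Continuous φ ∧ φ ≠ 0 ∧
          ∀ x, φ (T x) = Complex.exp (2 * Real.pi * Complex.I / (n : ℂ)) * φ x) →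
        n ∈ CF T) ∧
      (∀ (lam : ℂ) (φ ψ : X → ℂ),
        Continuous φ → φ ≠ 0 → (∀ x, φ (T x) = lam * φ x) →
        Continuous ψ → ψ ≠ 0 → (∀ x, ψ (T x) = lam * ψ x) →
        ∃ c : ℂ, ψ = fun x => c * φ x)) :=
  stmt18_general T
end

section
/- Let (n_i)_{i≥1} and (m_i)_{i≥1} be sequences of positive integers, and let T₁ and T₂ be the odometers on X₁ = ∏_{i≥1} ℤ/n_iℤ and X₂ = ∏_{i≥1} ℤ/m_iℤ respectively. Then: (i) T₁ is a continuous factor of T₂ (i.e. there exists a continuous surjection h : X₂ → X₁ with h∘T₂ = T₁∘h) if and only if CF(T₁) ⊆ CF(T₂); (ii) T₁ and T₂ are continuously conjugated (i.e. there exists a homeomorphism h : X₂ → X₁ with h∘T₂ = T₁∘h) if and only if CF(T₁) = CF(T₂). -/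
/-- The odometer ("adding machine") on `∏_{i} ℤ/n_iℤ`: add 1 at coordinate `i`
exactly when all earlier coordinates equal `-1` (and the carry propagates). -/
def odometer (n : ℕ → ℕ) : ((i : ℕ) → ZMod (n i)) → ((i : ℕ) → ZMod (n i)) :=
  fun x i => if ∀ j, j < i → x j = -1 then x i + 1 else x i

/-!
Read the first `N` digits of a point `x` of `∏ ℤ/n_iℤ` as the mixed-radix number
`v_N(x) = ∑_{i<N} x_i n_0 ⋯ n_{i-1} < P_N = n_0 ⋯ n_{N-1}`; the odometer acts on it as
`v ↦ v + 1 mod P_N`. A continuous map to a finite set depends only on finitely many digits, so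
`ℤ/kℤ` is a factor exactly when `k` divides some `P_N`, and `CF(T₁) ⊆ CF(T₂)` says that
every `P_N(n)` divides some `P_M(m)`. Then `v_M(x) mod P_N(n)` does not depend on the choice of `M`
and is the `N`-digit value of a unique point `h(x)`. The map `h` is continuous and equivariant;
its range is closed and meets every cylinder (already along the orbit of `0`), so it is onto,
and it is injective when the divisibility also holds in the other direction. A continuous
bijection of compact Hausdorff spaces is a homeomorphism.
-/

open Function PiNat

section Cylinder

variable {E : ℕ → Type*} [∀ i, TopologicalSpace (E i)] [∀ i, DiscreteTopology (E i)]
  {Y : Type*} [TopologicalSpace Y]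

lemma PiNat.exists_cylinder_subset_of_mem_nhds {x : ∀ i, E i} {s : Set (∀ i, E i)}
    (hs : s ∈ nhds x) : ∃ N, cylinder x N ⊆ s := by
  obtain ⟨_, ⟨z, N, rfl⟩, hx, hsub⟩ := (isTopologicalBasis_cylinders E).mem_nhds_iff.1 hs
  exact ⟨N, (mem_cylinder_iff_eq.1 hx).symm ▸ hsub⟩

lemma PiNat.mem_of_forall_cylinder_inter_nonempty {s : Set (∀ i, E i)} (hs : IsClosed s)
    {x : ∀ i, E i} (h : ∀ N, (cylinder x N ∩ s).Nonempty) : x ∈ s := by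
  refine hs.closure_subset (mem_closure_iff_nhds.2 fun U hU => ?_)
  obtain ⟨N, hN⟩ := exists_cylinder_subset_of_mem_nhds hU
  exact (h N).mono (Set.inter_subset_inter_left s hN)

lemma PiNat.continuous_of_forall_mem_cylinder {f : (∀ i, E i) → Y} (N : ℕ)
    (hf : ∀ x, ∀ y ∈ cylinder x N, f y = f x) : Continuous f :=
  ((IsLocallyConstant.iff_exists_open f).2 fun x =>
    ⟨cylinder x N, isOpen_cylinder E x N, self_mem_cylinder x N, hf x⟩).continuous

lemma PiNat.exists_forall_mem_cylinder_of_continuous [CompactSpace (∀ i, E i)]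
    [DiscreteTopology Y] {f : (∀ i, E i) → Y} (hf : Continuous f) :
    ∃ N, ∀ x, ∀ y ∈ cylinder x N, f y = f x := by
  let U : ℕ → Set (∀ i, E i) := fun N => {x | ∀ y ∈ cylinder x N, f y = f x}
  have hU_open : ∀ N, IsOpen (U N) := fun N => isOpen_iff_forall_mem_open.2 fun x hx =>
    ⟨cylinder x N, fun z hz y hy => by
      rw [mem_cylinder_iff_eq] at hz
      rw [hx y (hz ▸ hy), hx z (hz ▸ self_mem_cylinder z N)],
    isOpen_cylinder E x N, self_mem_cylinder x N⟩
  have hU_mono : Monotone U := fun _ _ hle _ hx y hy => hx y (cylinder_anti _ hle hy)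
  have hU_cover : Set.univ ⊆ ⋃ N, U N := fun x _ => by
    obtain ⟨N, hN⟩ := exists_cylinder_subset_of_mem_nhds
      ((isOpen_discrete {f x}).preimage hf |>.mem_nhds rfl)
    exact Set.mem_iUnion.2 ⟨N, fun y hy => hN hy⟩
  obtain ⟨N, hN⟩ := isCompact_univ.elim_directed_cover U hU_open hU_cover hU_mono.directed_le
  exact ⟨N, fun x => hN (Set.mem_univ x)⟩

end Cylinder

lemma ZMod.val_add_one_add_ite {k : ℕ} [NeZero k] (a : ZMod k) :
    (a + 1).val + (if a = -1 then k else 0) = a.val + 1 := by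
  have hneg : (-1 : ZMod k).val = k - 1 := by
    obtain ⟨j, rfl⟩ := Nat.exists_eq_succ_of_ne_zero (NeZero.ne k)
    exact ZMod.val_neg_one j
  have hlt := a.val_lt
  have hk := NeZero.one_le (n := k)
  rw [ZMod.val_add, ZMod.val_one_eq_one_mod, Nat.add_mod_mod]
  by_cases ha : a = -1
  · rw [if_pos ha, ha, hneg, Nat.sub_add_cancel hk, Nat.mod_self, zero_add]
  · have hval : a.val + 1 ≠ k := fun h => ha (ZMod.val_injective _ (by omega))
    rw [if_neg ha, Nat.mod_eq_of_lt (by omega), add_zero]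

lemma CF_subset_CF_of_semiconj {X Y : Type*} [TopologicalSpace X] [TopologicalSpace Y]
    {S : X → X} {T : Y → Y} {h : X → Y} (hc : Continuous h) (hs : Surjective h)
    (he : Semiconj h S T) : CF T ⊆ CF S := by
  rintro k ⟨hk, f, hfc, hfs, hfe⟩
  exact ⟨hk, f ∘ h, hfc.comp hc, hfs.comp hs, fun x => by simp only [comp_apply, he x, hfe]⟩

lemma map_iterate_of_semiconj_add_one {X : Type*} {k : ℕ} {T : X → X} {f : X → ZMod k}
    (hf : Semiconj f T (· + 1)) (j : ℕ) (x : X) : f (T^[j] x) = f x + j := by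
  rw [hf.iterate_right j x, add_right_iterate_apply, nsmul_one]

namespace Odometer

variable {n m : ℕ → ℕ}

def prefixProd (n : ℕ → ℕ) (N : ℕ) : ℕ := ∏ i ∈ Finset.range N, n i

def prefixValue (n : ℕ → ℕ) (N : ℕ) (x : ∀ i, ZMod (n i)) : ℕ :=
  ∑ i ∈ Finset.range N, (x i).val * prefixProd n i

-- inverts `x ↦ (prefixValue n N x)_N` on compatible sequences: digit `i` is read off `u (i + 1)`
def ofPrefixValues (n : ℕ → ℕ) (u : ℕ → ℕ) : ∀ i, ZMod (n i) :=
  fun i => (u (i + 1) / prefixProd n i : ℕ)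

lemma prefixProd_succ (N : ℕ) : prefixProd n (N + 1) = prefixProd n N * n N :=
  Finset.prod_range_succ _ _

lemma prefixProd_dvd_prefixProd {N N' : ℕ} (h : N ≤ N') : prefixProd n N ∣ prefixProd n N' :=
  Finset.prod_dvd_prod_of_subset _ _ _ (Finset.range_subset_range.2 h)

lemma prefixValue_succ (N : ℕ) (x : ∀ i, ZMod (n i)) :
    prefixValue n (N + 1) x = prefixValue n N x + (x N).val * prefixProd n N :=
  Finset.sum_range_succ _ _

lemma prefixValue_zero (N : ℕ) : prefixValue n N 0 = 0 := by
  simp [prefixValue]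

lemma prefixValue_ofPrefixValues {u : ℕ → ℕ} (hlt : ∀ N, u N < prefixProd n N)
    (hmod : ∀ N, u (N + 1) % prefixProd n N = u N) (N : ℕ) :
    prefixValue n N (ofPrefixValues n u) = u N := by
  induction N with
  | zero =>
    have h0 := hlt 0
    simp only [prefixProd, Finset.range_zero, Finset.prod_empty, Nat.lt_one_iff] at h0
    simp [prefixValue, h0]
  | succ N ih =>
    have hdiv : u (N + 1) / prefixProd n N < n N :=
      Nat.div_lt_of_lt_mul (prefixProd_succ (n := n) N ▸ hlt (N + 1))
    rw [prefixValue_succ, ih, ofPrefixValues, ZMod.val_natCast, Nat.mod_eq_of_lt hdiv, ← hmod N,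
      Nat.mod_add_div']

section NeZero

variable [∀ i, NeZero (n i)]

lemma prefixProd_pos (N : ℕ) : 0 < prefixProd n N :=
  Finset.prod_pos fun i _ => Nat.pos_of_neZero (n i)

lemma prefixValue_lt (N : ℕ) (x : ∀ i, ZMod (n i)) : prefixValue n N x < prefixProd n N := by
  induction N with
  | zero => simp [prefixValue, prefixProd]
  | succ N ih =>
    have hx := (x N).val_lt
    calc prefixValue n (N + 1) x
        < prefixProd n N + (x N).val * prefixProd n N := by rw [prefixValue_succ]; omega
      _ ≤ prefixProd n (N + 1) := by rw [prefixProd_succ]; nlinarith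

lemma prefixValue_mod_prefixProd {N N' : ℕ} (h : N ≤ N') (x : ∀ i, ZMod (n i)) :
    prefixValue n N' x % prefixProd n N = prefixValue n N x := by
  induction N', h using Nat.le_induction with
  | base => exact Nat.mod_eq_of_lt (prefixValue_lt N x)
  | succ N' hle ih =>
    obtain ⟨c, hc⟩ := prefixProd_dvd_prefixProd (n := n) hle
    rw [prefixValue_succ, hc, mul_left_comm, Nat.add_mul_mod_self_left, ih]

lemma prefixValue_succ_div (i : ℕ) (x : ∀ i, ZMod (n i)) :
    prefixValue n (i + 1) x / prefixProd n i = (x i).val := by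
  rw [prefixValue_succ, Nat.add_mul_div_right _ _ (prefixProd_pos i),
    Nat.div_eq_of_lt (prefixValue_lt i x), zero_add]

lemma prefixValue_eq_iff {N : ℕ} {x y : ∀ i, ZMod (n i)} :
    prefixValue n N y = prefixValue n N x ↔ y ∈ cylinder x N := by
  refine ⟨fun h i hi => ZMod.val_injective _ ?_, fun h => ?_⟩
  · rw [← prefixValue_succ_div, ← prefixValue_succ_div, ← prefixValue_mod_prefixProd hi,
      ← prefixValue_mod_prefixProd hi x, h]
  · exact Finset.sum_congr rfl fun i hi => by rw [h i (Finset.mem_range.1 hi)]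

lemma ext_of_forall_prefixValue_eq {x y : ∀ i, ZMod (n i)}
    (h : ∀ N, prefixValue n N y = prefixValue n N x) : y = x :=
  funext fun i => prefixValue_eq_iff.1 (h (i + 1)) i (Nat.lt_succ_self i)

lemma prefixValue_odometer_add_ite (N : ℕ) (x : ∀ i, ZMod (n i)) :
    prefixValue n N (odometer n x) + (if ∀ j < N, x j = -1 then prefixProd n N else 0) =
      prefixValue n N x + 1 := by
  induction N with
  | zero => simp [prefixValue, prefixProd]
  | succ N ih =>
    have hcarry : (∀ j < N + 1, x j = -1) ↔ (∀ j < N, x j = -1) ∧ x N = -1 := by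
      simp only [Nat.lt_succ_iff_lt_or_eq, or_imp, forall_and, forall_eq]
    rw [prefixValue_succ, prefixValue_succ, prefixProd_succ]
    simp only [hcarry]
    by_cases hc : ∀ j < N, x j = -1
    · have hdigit := ZMod.val_add_one_add_ite (x N)
      rw [if_pos hc] at ih
      rw [show odometer n x N = x N + 1 from if_pos hc]
      by_cases hxN : x N = -1
      · rw [if_pos ⟨hc, hxN⟩]
        rw [if_pos hxN] at hdigit
        linear_combination ih + prefixProd n N * hdigit
      · rw [if_neg fun h => hxN h.2]
        rw [if_neg hxN] at hdigit
        linear_combination ih + prefixProd n N * hdigit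
    · rw [if_neg hc] at ih
      rw [show odometer n x N = x N from if_neg hc, if_neg fun h => hc h.1]
      omega

lemma prefixValue_odometer (N : ℕ) (x : ∀ i, ZMod (n i)) :
    prefixValue n N (odometer n x) = (prefixValue n N x + 1) % prefixProd n N := by
  rw [← prefixValue_odometer_add_ite]
  split_ifs
  · rw [Nat.add_mod_right, Nat.mod_eq_of_lt (prefixValue_lt N _)]
  · rw [add_zero, Nat.mod_eq_of_lt (prefixValue_lt N _)]

lemma prefixValue_iterate_odometer (N k : ℕ) (x : ∀ i, ZMod (n i)) :
    prefixValue n N ((odometer n)^[k] x) = (prefixValue n N x + k) % prefixProd n N := by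
  induction k with
  | zero => exact (Nat.mod_eq_of_lt (prefixValue_lt N x)).symm
  | succ k ih => rw [iterate_succ_apply', prefixValue_odometer, ih, Nat.mod_add_mod, add_assoc]

lemma iterate_odometer_prefixProd_mem_cylinder (N : ℕ) (x : ∀ i, ZMod (n i)) :
    (odometer n)^[prefixProd n N] x ∈ cylinder x N := by
  rw [← prefixValue_eq_iff, prefixValue_iterate_odometer, Nat.add_mod_right,
    Nat.mod_eq_of_lt (prefixValue_lt N x)]

lemma continuous_prefixValue (N : ℕ) : Continuous (prefixValue n N) :=
  continuous_of_forall_mem_cylinder N fun _ _ hy => prefixValue_eq_iff.2 hy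

theorem CF_odometer : CF (odometer n) = {k | 0 < k ∧ ∃ N, k ∣ prefixProd n N} := by
  ext k
  refine ⟨fun ⟨hk, f, hfc, _, hfe⟩ => ⟨hk, ?_⟩, fun ⟨hk, N, hkN⟩ => ⟨hk, ?_⟩⟩
  · obtain ⟨N, hN⟩ := exists_forall_mem_cylinder_of_continuous hfc
    have hper := hN 0 _ (iterate_odometer_prefixProd_mem_cylinder N 0)
    rw [map_iterate_of_semiconj_add_one hfe, add_eq_left] at hper
    exact ⟨N, (ZMod.natCast_eq_zero_iff _ _).1 hper⟩
  · have : NeZero k := NeZero.of_pos hk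
    have hcast : ∀ a, ((a % prefixProd n N : ℕ) : ZMod k) = a := fun a =>
      (ZMod.natCast_eq_natCast_iff _ _ _).2 ((Nat.mod_modEq a _).of_dvd hkN)
    refine ⟨fun x => (prefixValue n N x : ZMod k),
      continuous_of_discreteTopology.comp (continuous_prefixValue N), fun c => ?_, fun x => ?_⟩
    · refine ⟨(odometer n)^[c.val] 0, ?_⟩
      simp only [prefixValue_iterate_odometer, prefixValue_zero, zero_add, hcast,
        ZMod.natCast_zmod_val]
    · simp only [prefixValue_odometer, hcast, Nat.cast_add, Nat.cast_one]

variable [∀ i, NeZero (m i)]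

lemma CF_odometer_subset_iff :
    CF (odometer n) ⊆ CF (odometer m) ↔ ∀ N, ∃ M, prefixProd n N ∣ prefixProd m M := by
  simp only [CF_odometer, Set.ofPred_subset_ofPred, and_imp]
  refine ⟨fun h N => (h _ (prefixProd_pos N) ⟨N, dvd_rfl⟩).2, fun h k hk ⟨N, hkN⟩ => ?_⟩
  obtain ⟨M, hNM⟩ := h N
  exact ⟨hk, M, hkN.trans hNM⟩

lemma prefixValue_mod_eq_of_dvd {d M M' : ℕ} (h : d ∣ prefixProd m M)
    (h' : d ∣ prefixProd m M') (x : ∀ i, ZMod (m i)) :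
    prefixValue m M x % d = prefixValue m M' x % d := by
  have key : ∀ {L L'}, L ≤ L' → d ∣ prefixProd m L →
      prefixValue m L x % d = prefixValue m L' x % d := fun hle hL => by
    rw [← prefixValue_mod_prefixProd hle x, Nat.mod_mod_of_dvd _ hL]
  rw [key (le_max_left M M') h, key (le_max_right M M') h']

end NeZero

noncomputable def factorMap (hdvd : ∀ N, ∃ M, prefixProd n N ∣ prefixProd m M) :
    (∀ i, ZMod (m i)) → ∀ i, ZMod (n i) := fun x =>
  ofPrefixValues n fun N => prefixValue m (hdvd N).choose x % prefixProd n N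

section FactorMap

variable [∀ i, NeZero (m i)] (hdvd : ∀ N, ∃ M, prefixProd n N ∣ prefixProd m M)

lemma continuous_factorMap : Continuous (factorMap hdvd) :=
  continuous_pi fun i => continuous_of_forall_mem_cylinder (hdvd (i + 1)).choose fun _ _ hy => by
    simp only [factorMap, ofPrefixValues, prefixValue_eq_iff.2 hy]

variable [∀ i, NeZero (n i)]

lemma prefixValue_factorMap {N M : ℕ} (hNM : prefixProd n N ∣ prefixProd m M)
    (x : ∀ i, ZMod (m i)) :
    prefixValue n N (factorMap hdvd x) = prefixValue m M x % prefixProd n N := by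
  have hspec := fun N => (hdvd N).choose_spec
  rw [factorMap, prefixValue_ofPrefixValues (fun N => Nat.mod_lt _ (prefixProd_pos N)) fun N => ?_]
  · exact prefixValue_mod_eq_of_dvd (hspec N) hNM x
  · have hdvd := prefixProd_dvd_prefixProd (n := n) N.le_succ
    rw [Nat.mod_mod_of_dvd _ hdvd]
    exact prefixValue_mod_eq_of_dvd (hdvd.trans (hspec (N + 1))) (hspec N) x

lemma factorMap_semiconj : Semiconj (factorMap hdvd) (odometer m) (odometer n) := fun x =>
  ext_of_forall_prefixValue_eq fun N => by
    obtain ⟨M, hNM⟩ := hdvd N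
    rw [prefixValue_factorMap hdvd hNM, prefixValue_odometer, prefixValue_odometer,
      prefixValue_factorMap hdvd hNM, Nat.mod_mod_of_dvd _ hNM, Nat.mod_add_mod]

lemma factorMap_surjective : Surjective (factorMap hdvd) := fun y => by
  refine mem_of_forall_cylinder_inter_nonempty
    (isCompact_range (continuous_factorMap hdvd)).isClosed fun N => ?_
  obtain ⟨M, hNM⟩ := hdvd N
  refine ⟨_, ?_, (odometer m)^[prefixValue n N y] 0, rfl⟩
  rw [← prefixValue_eq_iff, prefixValue_factorMap hdvd hNM, prefixValue_iterate_odometer,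
    prefixValue_zero, zero_add, Nat.mod_mod_of_dvd _ hNM, Nat.mod_eq_of_lt (prefixValue_lt N y)]

lemma factorMap_injective (hdvd' : ∀ M, ∃ N, prefixProd m M ∣ prefixProd n N) :
    Injective (factorMap hdvd) := fun x x' hxx' =>
  ext_of_forall_prefixValue_eq fun M => by
    obtain ⟨N, hMN⟩ := hdvd' M
    obtain ⟨L, hNL⟩ := hdvd N
    have key : ∀ z, prefixValue m M z = prefixValue n N (factorMap hdvd z) % prefixProd m M :=
      fun z => by
        rw [prefixValue_factorMap hdvd hNL, Nat.mod_mod_of_dvd _ hMN,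
          ← prefixValue_mod_eq_of_dvd dvd_rfl (hMN.trans hNL),
          Nat.mod_eq_of_lt (prefixValue_lt M z)]
    rw [key x, key x', hxx']

end FactorMap

end Odometer

open Odometer

/-- Let `T₁, T₂` be the odometers on `∏ ℤ/n_iℤ` and `∏ ℤ/m_iℤ`.  Then (i) `T₁` is a
continuous factor of `T₂` iff `CF(T₁) ⊆ CF(T₂)`; (ii) `T₁` and `T₂` are
continuously conjugated iff `CF(T₁) = CF(T₂)`. -/
theorem stmt19 (n m : ℕ → ℕ) (hn : ∀ i, 0 < n i) (hm : ∀ i, 0 < m i) :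
    ((∃ h : ((i : ℕ) → ZMod (m i)) → ((i : ℕ) → ZMod (n i)),
        Continuous h ∧ Function.Surjective h ∧
        ∀ x, h (odometer m x) = odometer n (h x)) ↔
      CF (odometer n) ⊆ CF (odometer m)) ∧
    ((∃ h : ((i : ℕ) → ZMod (m i)) ≃ₜ ((i : ℕ) → ZMod (n i)),
        ∀ x, h (odometer m x) = odometer n (h x)) ↔
      CF (odometer n) = CF (odometer m)) := by
  have : ∀ i, NeZero (n i) := fun i => NeZero.of_pos (hn i)
  have : ∀ i, NeZero (m i) := fun i => NeZero.of_pos (hm i)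
  refine ⟨⟨fun ⟨h, hc, hs, he⟩ => CF_subset_CF_of_semiconj hc hs he, fun hsub => ?_⟩,
    ⟨fun ⟨h, he⟩ => ?_, fun heq => ?_⟩⟩
  · have hsub := CF_odometer_subset_iff.1 hsub
    exact ⟨factorMap hsub, continuous_factorMap hsub, factorMap_surjective hsub,
      factorMap_semiconj hsub⟩
  · exact (CF_subset_CF_of_semiconj h.continuous h.surjective he).antisymm
      (CF_subset_CF_of_semiconj h.symm.continuous h.symm.surjective
        (Semiconj.inverse_left he h.left_inv h.right_inv))
  · have hsub := CF_odometer_subset_iff.1 heq.le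
    have hbij : Bijective (factorMap hsub) :=
      ⟨factorMap_injective hsub (CF_odometer_subset_iff.1 heq.ge), factorMap_surjective hsub⟩
    let e := Equiv.ofBijective _ hbij
    exact ⟨(show Continuous e from continuous_factorMap hsub).homeoOfEquivCompactToT2,
      factorMap_semiconj hsub⟩
end
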